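/- Hartogs's continuation theorem: let N ≥ 1, R > 0, and 2 ≤ k ≤ N; let P := {(z¹,…,z^N) ∈ ℂ^N : |z^j| < R for all 1 ≤ j ≤ N} and A := {(z¹,…,z^N) ∈ P : z¹ = z² = ⋯ = z^k = 0}. Then for every holomorphic function f : P∖A → ℂ there exists a unique holomorphic function f̃ : P → ℂ such that f = f̃ on P∖A. (Paper's Lemma 8.3.20.) -/

import Mathlib

/-!
Write `z = (z₁, z')` with `z₁` the first coordinate. On the part `|z₁| < R/2` of `P` put
`g(z) = (2πi)⁻¹ ∮_{|ζ| = R/2} f(ζ, z') / (ζ - z₁) dζ`. The circle `|ζ| = R/2` never meets `A`,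
so `g` is holomorphic: differentiating under the integral sign only needs a Lipschitz bound
on the integrand, which the Schwarz lemma provides. When the second coordinate of `z` is nonzero,
the whole disc `|ζ| ≤ R/2` in the `z₁`-slice through `z` avoids `A`, and Cauchy's formula gives
`g = f` there; since such points are dense, `g = f` on the overlap with `P ∖ A`. Gluing `f` and
`g` gives the extension, and it is unique because `P ∖ A` is dense in `P`.
-/

open Complex Metric Set Function MeasureTheory
open scoped Real Interval

section ParametricIntegral

variable {E G : Type*} [NormedAddCommGroup E] [NormedSpace ℂ E]
  [NormedAddCommGroup G] [NormedSpace ℂ G]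

theorem lipschitzOnWith_ball_of_differentiableOn_of_norm_le {f : E → G} {c : E} {r M : ℝ}
    (hd : DifferentiableOn ℂ f (ball c (3 * r))) (hr : 0 < r)
    (hM : ∀ x ∈ ball c (3 * r), ‖f x‖ ≤ M) :
    LipschitzOnWith (M / r).toNNReal f (ball c r) := by
  refine LipschitzOnWith.of_dist_le' fun x hx y hy => ?_
  have hsub : ball y (2 * r) ⊆ ball c (3 * r) :=
    ball_subset_ball' (by linarith [mem_ball.1 hy])
  have hmaps : MapsTo f (ball y (2 * r)) (closedBall (f y) (2 * M)) := fun z hz => by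
    rw [mem_closedBall, dist_eq_norm]
    calc ‖f z - f y‖ ≤ ‖f z‖ + ‖f y‖ := norm_sub_le _ _
      _ ≤ 2 * M := by linarith [hM z (hsub hz), hM y (hsub (mem_ball_self (by positivity)))]
  have hxy : x ∈ ball y (2 * r) := by
    rw [mem_ball]
    linarith [dist_triangle_right x y c, mem_ball.1 hx, mem_ball.1 hy]
  calc dist (f x) (f y) ≤ 2 * M / (2 * r) * dist x y :=
        Complex.dist_le_div_mul_dist_of_mapsTo_ball (hd.mono hsub) hmaps hxy
    _ = M / r * dist x y := by rw [mul_div_mul_left _ _ two_ne_zero]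

theorem differentiableOn_intervalIntegral_of_hasFDerivAt [ProperSpace E] {F : E → ℝ → G}
    {F' : E → ℝ → E →L[ℂ] G} {U : Set E} {a b : ℝ} (hU : IsOpen U)
    (hF : ContinuousOn (uncurry F) (U ×ˢ univ))
    (hF' : ∀ x ∈ U, ∀ θ, HasFDerivAt (F · θ) (F' x θ) x)
    (hF'_meas : ∀ x ∈ U, AEStronglyMeasurable (F' x) (volume.restrict (Ι a b))) :
    DifferentiableOn ℂ (fun x => ∫ θ in a..b, F x θ) U := by
  intro x₀ hx₀
  obtain ⟨r, hr, hrU⟩ : ∃ r > 0, closedBall x₀ (3 * r) ⊆ U := by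
    obtain ⟨ε, hε, hεU⟩ := nhds_basis_closedBall.mem_iff.1 (hU.mem_nhds hx₀)
    exact ⟨ε / 3, by positivity, by rwa [mul_div_cancel₀ _ three_ne_zero]⟩
  have hcont : ∀ x ∈ U, Continuous (F x) := fun x hx =>
    continuousOn_univ.1 <|
      hF.comp (Continuous.prodMk_right x).continuousOn fun _ _ => ⟨hx, trivial⟩
  obtain ⟨M, hM⟩ := ((isCompact_closedBall x₀ (3 * r)).prod isCompact_uIcc
    ).exists_bound_of_continuousOn (hF.mono (prod_mono hrU (subset_univ (uIcc a b))))
  have hlip : ∀ θ ∈ Ι a b, LipschitzOnWith (Real.nnabs (M / r)) (F · θ) (ball x₀ r) := by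
    intro θ hθ
    refine (lipschitzOnWith_ball_of_differentiableOn_of_norm_le (fun x hx =>
      (hF' x (hrU (ball_subset_closedBall hx)) θ).differentiableAt.differentiableWithinAt)
      hr fun x hx => hM (x, θ) ⟨ball_subset_closedBall hx, uIoc_subset_uIcc hθ⟩).weaken ?_
    exact Real.toNNReal_le_iff_le_coe.2 (le_abs_self (M / r))
  have hderiv := intervalIntegral.hasFDerivAt_integral_of_dominated_loc_of_lip (μ := volume)
    (bound := fun _ => M / r) (ball_mem_nhds x₀ hr)
    (Filter.eventually_of_mem (hU.mem_nhds hx₀) fun x hx => (hcont x hx).aestronglyMeasurable)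
    ((hcont x₀ hx₀).intervalIntegrable a b) (hF'_meas x₀ hx₀)
    (ae_of_all _ hlip) intervalIntegrable_const (ae_of_all _ fun θ _ => hF' x₀ hx₀ θ)
  exact hderiv.2.differentiableAt.differentiableWithinAt

end ParametricIntegral

theorem DifferentiableOn.piecewise_of_eqOn {𝕜 E F : Type*} [NontriviallyNormedField 𝕜]
    [NormedAddCommGroup E] [NormedSpace 𝕜 E] [NormedAddCommGroup F] [NormedSpace 𝕜 F]
    {f g : E → F} {s t : Set E} [∀ x, Decidable (x ∈ s)] (hf : DifferentiableOn 𝕜 f s)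
    (hg : DifferentiableOn 𝕜 g t) (hfg : EqOn f g (s ∩ t)) (hs : IsOpen s) (ht : IsOpen t) :
    DifferentiableOn 𝕜 (s.piecewise f g) (s ∪ t) := by
  have hgt : EqOn (s.piecewise f g) g t := fun x hx => by
    by_cases hxs : x ∈ s
    · rw [piecewise_eq_of_mem _ _ _ hxs, hfg ⟨hxs, hx⟩]
    · rw [piecewise_eq_of_notMem _ _ _ hxs]
  rintro x (hx | hx)
  · exact ((hf.congr (piecewise_eqOn s f g)).differentiableAt
      (hs.mem_nhds hx)).differentiableWithinAt
  · exact ((hg.congr hgt).differentiableAt (ht.mem_nhds hx)).differentiableWithinAt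

section CoordinateSpace

variable {ι : Type*}

theorem isOpen_setOf_forall_norm_lt [Finite ι] (R : ℝ) :
    IsOpen {z : ι → ℂ | ∀ j, ‖z j‖ < R} := by
  rw [ofPred_forall]
  exact isOpen_iInter_of_finite fun j => isOpen_lt (by fun_prop) continuous_const

theorem IsOpen.subset_closure_inter_apply_ne_zero {W : Set (ι → ℂ)} (hW : IsOpen W) (e : ι) :
    W ⊆ closure (W ∩ {z | z e ≠ 0}) :=
  ((dense_compl_singleton (0 : ℂ)).preimage (isOpenMap_eval e)).open_subset_closure_inter hW

theorem Set.EqOn.of_inter_apply_ne_zero {X : Type*} [TopologicalSpace X] [T2Space X]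
    {W : Set (ι → ℂ)} {f g : (ι → ℂ) → X} (hW : IsOpen W) (hf : ContinuousOn f W)
    (hg : ContinuousOn g W) (e : ι) (h : EqOn f g (W ∩ {z | z e ≠ 0})) : EqOn f g W :=
  h.of_subset_closure hf hg inter_subset_left (hW.subset_closure_inter_apply_ne_zero e)

variable [Fintype ι] [DecidableEq ι]

theorem hasFDerivAt_update_const {𝕜 : Type*} [NontriviallyNormedField 𝕜] {E : ι → Type*}
    [∀ i, NormedAddCommGroup (E i)] [∀ i, NormedSpace 𝕜 (E i)] (i : ι) (y : E i) (x : ∀ i, E i) :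
    HasFDerivAt (fun x => update x i y) (ContinuousLinearMap.pi fun j =>
      if j = i then (0 : (∀ i, E i) →L[𝕜] E j) else ContinuousLinearMap.proj j) x := by
  refine hasFDerivAt_pi.2 fun j => ?_
  rcases eq_or_ne j i with rfl | hj
  · simpa using hasFDerivAt_const y x
  · simpa [hj] using hasFDerivAt_apply j x

noncomputable def coordCauchyIntegral (f : (ι → ℂ) → ℂ) (i : ι) (ρ : ℝ) (z : ι → ℂ) : ℂ :=
  (2 * π * I)⁻¹ • ∮ ζ in C(0, ρ), (ζ - z i)⁻¹ • f (update z i ζ)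

variable {f : (ι → ℂ) → ℂ} {S V : Set (ι → ℂ)} {i : ι} {ρ : ℝ}

theorem coordCauchyIntegral_eq_self {z : ι → ℂ} (hf : DifferentiableOn ℂ f S)
    (hzS : MapsTo (update z i) (closedBall 0 ρ) S) (hz : ‖z i‖ < ρ) :
    coordCauchyIntegral f i ρ z = f z := by
  have hslice : DifferentiableOn ℂ (fun ζ => f (update z i ζ)) (closedBall 0 ρ) :=
    hf.comp (fun ζ _ => (hasFDerivAt_update z ζ).differentiableAt.differentiableWithinAt) hzS
  rw [coordCauchyIntegral, hslice.circleIntegral_sub_inv_smul (mem_ball_zero_iff.2 hz),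
    update_eq_self, inv_smul_smul₀ (by simp [Real.pi_ne_zero])]

theorem differentiableOn_coordCauchyIntegral (hf : DifferentiableOn ℂ f S) (hS : IsOpen S)
    (hV : IsOpen V) (hVρ : ∀ z ∈ V, ‖z i‖ < ρ)
    (hsphere : ∀ z ∈ V, MapsTo (update z i) (sphere 0 ρ) S) :
    DifferentiableOn ℂ (coordCauchyIntegral f i ρ) V := by
  have hne : ∀ z ∈ V, ∀ θ, circleMap 0 ρ θ - z i ≠ 0 := fun z hz θ h => by
    have := hVρ z hz
    rw [← sub_eq_zero.1 h, norm_circleMap_zero] at this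
    exact (le_abs_self ρ).not_gt this
  have hmem : ∀ z ∈ V, ∀ θ, update z i (circleMap 0 ρ θ) ∈ S := fun z hz θ =>
    hsphere z hz (circleMap_mem_sphere 0 ((norm_nonneg _).trans_lt (hVρ z hz)).le θ)
  have hc : Continuous (circleMap 0 ρ) := continuous_circleMap 0 ρ
  show DifferentiableOn ℂ (fun z => (2 * π * I)⁻¹ • ∫ θ in (0 : ℝ)..2 * π,
    deriv (circleMap 0 ρ) θ * ((circleMap 0 ρ θ - z i)⁻¹ * f (update z i (circleMap 0 ρ θ)))) V
  -- `F'` is read off from the type of the derivative term.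
  refine DifferentiableOn.const_smul (differentiableOn_intervalIntegral_of_hasFDerivAt hV ?_
    (fun x hx θ => (((hasDerivAt_inv (hne x hx θ)).comp_hasFDerivAt x
      ((hasFDerivAt_const _ x).sub (hasFDerivAt_apply i x))).mul
      ((hf.differentiableAt (hS.mem_nhds (hmem x hx θ))).hasFDerivAt.comp x
        (hasFDerivAt_update_const i _ x))).const_mul (deriv (circleMap 0 ρ) θ)) ?_)
    ((2 * π * I)⁻¹ : ℂ)
  · have hc' : Continuous fun p : (ι → ℂ) × ℝ => circleMap 0 ρ p.2 :=
      hc.comp continuous_snd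
    simp only [deriv_circleMap]
    refine (hc'.mul continuous_const).continuousOn.mul (ContinuousOn.mul ?_ ?_)
    · exact (hc'.sub (by fun_prop)).continuousOn.inv₀ fun p hp => hne p.1 hp.1 p.2
    · exact hf.continuousOn.comp (by fun_prop) fun p hp => hmem p.1 hp.1 p.2
  · intro x hx
    have hfd : Measurable fun θ => (fderiv ℂ f (update x i (circleMap 0 ρ θ))).comp
        (ContinuousLinearMap.pi fun j =>
          if j = i then (0 : (ι → ℂ) →L[ℂ] ℂ) else ContinuousLinearMap.proj j) :=
      (ContinuousLinearMap.precomp ℂ _).continuous.measurable.comp (by fun_prop)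
    have hfc : Continuous fun θ => f (update x i (circleMap 0 ρ θ)) :=
      hf.continuousOn.comp_continuous (by fun_prop) (hmem x hx)
    have hinv : Continuous fun θ => (circleMap 0 ρ θ - x i)⁻¹ :=
      (hc.sub continuous_const).inv₀ (hne x hx)
    simp only [deriv_circleMap, Function.comp_apply]
    refine ((hc.mul continuous_const).aestronglyMeasurable).smul
      ((hinv.aestronglyMeasurable.smul hfd.aestronglyMeasurable).add ?_)
    exact (hfc.smul ((((hc.sub continuous_const).pow 2).inv₀
      fun θ => pow_ne_zero 2 (hne x hx θ)).neg.smul continuous_const)).aestronglyMeasurable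

theorem eqOn_coordCauchyIntegral (hf : DifferentiableOn ℂ f S) (hS : IsOpen S) (hV : IsOpen V)
    (hVρ : ∀ z ∈ V, ‖z i‖ < ρ) (hsphere : ∀ z ∈ V, MapsTo (update z i) (sphere 0 ρ) S)
    {e : ι} (hdisc : ∀ z ∈ V, z e ≠ 0 → MapsTo (update z i) (closedBall 0 ρ) S) :
    EqOn f (coordCauchyIntegral f i ρ) (S ∩ V) :=
  .of_inter_apply_ne_zero (hS.inter hV) (hf.continuousOn.mono inter_subset_left)
    ((differentiableOn_coordCauchyIntegral hf hS hV hVρ hsphere).continuousOn.mono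
      inter_subset_right) e
    fun z hz => (coordCauchyIntegral_eq_self hf (hdisc z hz.1.2 hz.2) (hVρ z hz.1.2)).symm

theorem DifferentiableOn.exists_polydisc_extension {R : ℝ} {e : ι}
    (hf : DifferentiableOn ℂ f S) (hS : IsOpen S) (hie : i ≠ e)
    (hPS : ∀ z : ι → ℂ, (∀ j, ‖z j‖ < R) → z i ≠ 0 ∨ z e ≠ 0 → z ∈ S) :
    ∃ F, DifferentiableOn ℂ F {z | ∀ j, ‖z j‖ < R} ∧ EqOn f F S := by
  classical
  set U := {z : ι → ℂ | (∀ j, ‖z j‖ < R) ∧ ‖z i‖ < R / 2}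
  have hU : IsOpen U := (isOpen_setOf_forall_norm_lt R).inter
    (isOpen_lt (continuous_norm.comp (continuous_apply i)) continuous_const)
  have hupd : ∀ z ∈ U, ∀ ζ : ℂ, ‖ζ‖ ≤ R / 2 → ∀ j, ‖update z i ζ j‖ < R := fun z hz ζ hζ =>
    (forall_update_iff z fun _ w => ‖w‖ < R).2
      ⟨by linarith [norm_nonneg (z i), hz.2], fun j _ => hz.1 j⟩
  have hsphere : ∀ z ∈ U, MapsTo (update z i) (sphere 0 (R / 2)) S := fun z hz ζ hζ => by
    rw [mem_sphere_zero_iff_norm] at hζ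
    refine hPS _ (hupd z hz ζ hζ.le) (Or.inl ?_)
    rw [update_self, ← norm_pos_iff, hζ]
    linarith [norm_nonneg (z i), hz.2]
  have hdisc : ∀ z ∈ U, z e ≠ 0 → MapsTo (update z i) (closedBall 0 (R / 2)) S :=
    fun z hz hze ζ hζ => hPS _ (hupd z hz ζ (mem_closedBall_zero_iff.1 hζ))
      (Or.inr (by rwa [update_of_ne hie.symm]))
  have hUi : ∀ z ∈ U, ‖z i‖ < R / 2 := fun z hz => hz.2
  refine ⟨S.piecewise f (coordCauchyIntegral f i (R / 2)),
    (hf.piecewise_of_eqOn (differentiableOn_coordCauchyIntegral hf hS hU hUi hsphere)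
      (eqOn_coordCauchyIntegral hf hS hU hUi hsphere hdisc) hS hU).mono fun z hz => ?_,
    (piecewise_eqOn _ _ _).symm⟩
  by_cases hzi : z i = 0
  · exact Or.inr ⟨hz, by rw [hzi, norm_zero]; linarith [norm_nonneg (z i), hz i]⟩
  · exact Or.inl (hPS z hz (Or.inl hzi))

end CoordinateSpace

theorem hartogs_continuation_general
    (N : ℕ) (R : ℝ) (k : ℕ) (hk2 : 2 ≤ k) (hkN : k ≤ N)
    (P A : Set (Fin N → ℂ))
    (hP : P = {z : Fin N → ℂ | ∀ j, ‖z j‖ < R})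
    (hA : A = {z ∈ P | ∀ j : Fin N, (j : ℕ) < k → z j = 0})
    (f : (Fin N → ℂ) → ℂ) (hf : DifferentiableOn ℂ f (P \ A)) :
    ∃ ftilde : (Fin N → ℂ) → ℂ,
      DifferentiableOn ℂ ftilde P ∧ Set.EqOn f ftilde (P \ A) ∧
      ∀ g : (Fin N → ℂ) → ℂ, DifferentiableOn ℂ g P → Set.EqOn f g (P \ A) →
        Set.EqOn ftilde g P := by
  set Z := {z : Fin N → ℂ | ∀ j : Fin N, (j : ℕ) < k → z j = 0}
  set i : Fin N := ⟨0, by omega⟩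
  set e : Fin N := ⟨1, by omega⟩
  have hPA : P \ A = P \ Z := by
    ext z
    simp [hA, Z]
  rw [hPA] at hf ⊢
  have hPopen : IsOpen P := hP ▸ isOpen_setOf_forall_norm_lt R
  have hZ : IsClosed Z := by
    simp only [Z, ofPred_forall]
    exact isClosed_iInter fun j => isClosed_iInter fun _ =>
      isClosed_eq (continuous_apply j) continuous_const
  have hcover : ∀ z : Fin N → ℂ, (∀ j, ‖z j‖ < R) → z i ≠ 0 ∨ z e ≠ 0 → z ∈ P \ Z :=
    fun z hz hz0 => ⟨hP ▸ hz, fun hzZ =>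
      hz0.elim (· (hzZ i (by simp [i]; omega))) (· (hzZ e (by simp [e]; omega)))⟩
  obtain ⟨F, hF, hfF⟩ := hf.exists_polydisc_extension (hPopen.sdiff hZ)
    (by simp [i, e, Fin.ext_iff]) hcover
  rw [← hP] at hF
  refine ⟨F, hF, hfF, fun g hg hfg =>
    .of_inter_apply_ne_zero hPopen hF.continuousOn hg.continuousOn e fun z hz => ?_⟩
  have hz := hcover z (by simpa [hP] using hz.1) (Or.inr hz.2)
  rw [← hfF hz, hfg hz]

/-- **Paper's Lemma 8.3.20 (Hartogs's continuation theorem).** Let `N ≥ 1`, `R > 0` and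
`2 ≤ k ≤ N`.  Let `P` be the polydisc `{z ∈ ℂ^N : |zʲ| < R for all j}` and
`A = {z ∈ P : z¹ = ⋯ = z^k = 0}`.  Then every holomorphic function `f : P ∖ A → ℂ`
extends to a unique holomorphic function `f̃ : P → ℂ` with `f = f̃` on `P ∖ A`. -/
theorem hartogs_continuation
    (N : ℕ) (hN : 1 ≤ N) (R : ℝ) (hR : 0 < R) (k : ℕ) (hk2 : 2 ≤ k) (hkN : k ≤ N)
    (P A : Set (Fin N → ℂ))
    (hP : P = {z : Fin N → ℂ | ∀ j, ‖z j‖ < R})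
    (hA : A = {z ∈ P | ∀ j : Fin N, (j : ℕ) < k → z j = 0})
    (f : (Fin N → ℂ) → ℂ) (hf : DifferentiableOn ℂ f (P \ A)) :
    ∃ ftilde : (Fin N → ℂ) → ℂ,
      DifferentiableOn ℂ ftilde P ∧ Set.EqOn f ftilde (P \ A) ∧
      ∀ g : (Fin N → ℂ) → ℂ, DifferentiableOn ℂ g P → Set.EqOn f g (P \ A) →
        Set.EqOn ftilde g P :=
  hartogs_continuation_general N R k hk2 hkN P A hP hA f hf
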